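/- The ω-language L_{a=b} ∩ L_{2a=b}, where L_{a=b} = {α ∈ {a,b}^ω | |α[1:i]|_a = |α[1:i]|_b for infinitely many i} and L_{2a=b} = {α | 2|α[1:i]|_a = |α[1:i]|_b for infinitely many i}, contains no ultimately periodic word and hence is not recognized by any weak reset Parikh automaton; therefore deterministic weak reset PA languages are not closed under intersection. -/

import Mathlib

/-! Common definitions: semi-linear sets, Parikh automata on finite and infinite words. -/

/-- The linear set with base vector `b` and finite set `P` of period vectors. -/
def LinSet {d : ℕ} {M : Type} [AddCommMonoid M] (b : Fin d → M)
    (P : Finset (Fin d → M)) : Set (Fin d → M) :=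
  {v | ∃ z : (Fin d → M) → ℕ, v = b + ∑ p ∈ P, z p • p}

/-- A set is semi-linear if it is a finite union of linear sets. -/
def SemiLin {d : ℕ} {M : Type} [AddCommMonoid M] (S : Set (Fin d → M)) : Prop :=
  ∃ (n : ℕ) (b : Fin n → Fin d → M) (P : Fin n → Finset (Fin d → M)),
    S = ⋃ i, LinSet (b i) (P i)

/-- The length-`n` prefix of an infinite word. -/
def pref {S : Type} (α : ℕ → S) (n : ℕ) : List S := List.ofFn fun i : Fin n => α i.1

/-- An infinite word is ultimately periodic if it has the form `u v^ω`. -/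
def UltimatelyPeriodic {S : Type} (α : ℕ → S) : Prop :=
  ∃ n p, 0 < p ∧ ∀ i, n ≤ i → α (i + p) = α i

/-- The finite infix `α[m+1 : n]` (0-indexed positions `m, …, n-1`). -/
def infixSeg {S : Type} (α : ℕ → S) (m n : ℕ) : List S :=
  List.ofFn fun j : Fin (n - m) => α (m + j.1)

/-- `W^ω`: infinite concatenations of non-empty words from `W`. -/
def omegaPow {S : Type} (W : Set (List S)) : Set (ℕ → S) :=
  {α | ∃ k : ℕ → ℕ, k 0 = 0 ∧ StrictMono k ∧ ∀ i, infixSeg α (k i) (k (i + 1)) ∈ W}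

/-- A deterministic Parikh automaton with states `Q`, alphabet `S`, dimension `d`,
and a constraint set `C` of vectors over `M` (`M = ℕ`, or `M = ℕ∞` for limit PA). -/
structure DetPA (Q S : Type) (d : ℕ) (M : Type) where
  init : Q
  trans : Q → S → (Fin d → ℕ) × Q
  acc : Q → Prop
  C : Set (Fin d → M)

namespace DetPA

variable {Q S M : Type} {d : ℕ}

/-- The run of `A` from state `p` on the infinite word `α`: state after `i` letters. -/
def run (A : DetPA Q S d M) (p : Q) (α : ℕ → S) : ℕ → Q
  | 0 => p
  | i + 1 => (A.trans (A.run p α i) (α i)).2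

/-- The state of the unique run of `A` on `α` after `i` letters. -/
def stateAt (A : DetPA Q S d M) (α : ℕ → S) : ℕ → Q := A.run A.init α

/-- The vector of the `i`-th transition of the unique run of `A` on `α`. -/
def step (A : DetPA Q S d M) (α : ℕ → S) (i : ℕ) : Fin d → ℕ :=
  (A.trans (A.stateAt α i) (α i)).1

/-- Sum of transition vectors of the run of `A` on `α` on positions `m, …, n-1`. -/
def vecSum (A : DetPA Q S d M) (α : ℕ → S) (m n : ℕ) : Fin d → ℕ :=
  ∑ i ∈ Finset.Ico m n, A.step α i

/-- The state reached when reading a finite word from state `p`. -/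
def runList (A : DetPA Q S d M) : Q → List S → Q
  | p, [] => p
  | p, a :: w => A.runList (A.trans p a).2 w

/-- The sum of transition vectors collected when reading a finite word from state `p`. -/
def sumList (A : DetPA Q S d M) : Q → List S → (Fin d → ℕ)
  | _, [] => 0
  | p, a :: w => (A.trans p a).1 + A.sumList (A.trans p a).2 w

/-- Finite-word acceptance: end in an accepting state with vector sum in `C`. -/
def AcceptsWord (A : DetPA Q S d ℕ) (w : List S) : Prop :=
  A.acc (A.runList A.init w) ∧ A.sumList A.init w ∈ A.C

/-- The run visits accepting states infinitely often. -/
def InfAcc (A : DetPA Q S d M) (α : ℕ → S) : Prop :=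
  ∀ n, ∃ i, n ≤ i ∧ A.acc (A.stateAt α i)

/-- Reachability condition. -/
def ReachAccept (A : DetPA Q S d ℕ) (α : ℕ → S) : Prop :=
  ∃ i, 1 ≤ i ∧ A.acc (A.stateAt α i) ∧ A.vecSum α 0 i ∈ A.C

/-- Reachability-regular condition. -/
def ReachRegAccept (A : DetPA Q S d ℕ) (α : ℕ → S) : Prop :=
  A.ReachAccept α ∧ A.InfAcc α

/-- Büchi condition. -/
def BuchiAccept (A : DetPA Q S d ℕ) (α : ℕ → S) : Prop :=
  ∀ n, ∃ i, n ≤ i ∧ 1 ≤ i ∧ A.acc (A.stateAt α i) ∧ A.vecSum α 0 i ∈ A.C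

/-- Weak reset condition. -/
def WeakResetAccept (A : DetPA Q S d ℕ) (α : ℕ → S) : Prop :=
  ∃ k : ℕ → ℕ, k 0 = 0 ∧ StrictMono k ∧
    (∀ i, A.acc (A.stateAt α (k (i + 1)))) ∧
    (∀ i, A.vecSum α (k i) (k (i + 1)) ∈ A.C)

/-- Strong reset condition: accepting states occur infinitely often, and between any
two consecutive accepting positions (and from position `0` to the first one) the
collected vector lies in `C`. -/
def StrongResetAccept (A : DetPA Q S d ℕ) (α : ℕ → S) : Prop :=
  (∀ n, ∃ i, n ≤ i ∧ 1 ≤ i ∧ A.acc (A.stateAt α i)) ∧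
  ∀ m n, m < n → (m = 0 ∨ (1 ≤ m ∧ A.acc (A.stateAt α m))) →
    A.acc (A.stateAt α n) →
    (∀ j, m < j → j < n → ¬ A.acc (A.stateAt α j)) →
    A.vecSum α m n ∈ A.C

/-- The extended Parikh image of the unique run of `A` on `α`: componentwise the
supremum in `ℕ∞` of the partial sums (`∞` iff the component is incremented
infinitely often, else the finite total sum). -/
noncomputable def limImage (A : DetPA Q S d M) (α : ℕ → S) : Fin d → ℕ∞ :=
  fun j => ⨆ n, (A.vecSum α 0 n j : ℕ∞)

/-- Limit condition. -/
def LimitAccept (A : DetPA Q S d ℕ∞) (α : ℕ → S) : Prop :=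
  A.InfAcc α ∧ A.limImage α ∈ A.C

end DetPA

/-- `U` is recognized by a deterministic finite-word Parikh automaton. -/
def DetPARecogFin {S : Type} (U : Set (List S)) : Prop :=
  ∃ (d : ℕ) (Q : Type) (_ : Finite Q) (A : DetPA Q S d ℕ),
    SemiLin A.C ∧ U = {w | A.AcceptsWord w}

/-- `L` is recognized by a deterministic reachability PA. -/
def DetReachRecog {S : Type} (L : Set (ℕ → S)) : Prop :=
  ∃ (d : ℕ) (Q : Type) (_ : Finite Q) (A : DetPA Q S d ℕ),
    SemiLin A.C ∧ L = {α | A.ReachAccept α}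

/-- `L` is recognized by a deterministic reachability-regular PA. -/
def DetReachRegRecog {S : Type} (L : Set (ℕ → S)) : Prop :=
  ∃ (d : ℕ) (Q : Type) (_ : Finite Q) (A : DetPA Q S d ℕ),
    SemiLin A.C ∧ L = {α | A.ReachRegAccept α}

/-- `L` is recognized by a deterministic Büchi PA. -/
def DetBuchiRecog {S : Type} (L : Set (ℕ → S)) : Prop :=
  ∃ (d : ℕ) (Q : Type) (_ : Finite Q) (A : DetPA Q S d ℕ),
    SemiLin A.C ∧ L = {α | A.BuchiAccept α}

/-- `L` is recognized by a deterministic weak reset PA. -/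
def DetWeakResetRecog {S : Type} (L : Set (ℕ → S)) : Prop :=
  ∃ (d : ℕ) (Q : Type) (_ : Finite Q) (A : DetPA Q S d ℕ),
    SemiLin A.C ∧ L = {α | A.WeakResetAccept α}

/-- `L` is recognized by a deterministic strong reset PA. -/
def DetStrongResetRecog {S : Type} (L : Set (ℕ → S)) : Prop :=
  ∃ (d : ℕ) (Q : Type) (_ : Finite Q) (A : DetPA Q S d ℕ),
    SemiLin A.C ∧ L = {α | A.StrongResetAccept α}

/-- `L` is recognized by a deterministic limit PA (constraint set over `ℕ∞`). -/
def DetLimitRecog {S : Type} (L : Set (ℕ → S)) : Prop :=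
  ∃ (d : ℕ) (Q : Type) (_ : Finite Q) (A : DetPA Q S d ℕ∞),
    SemiLin A.C ∧ L = {α | A.LimitAccept α}

/-- A nondeterministic Parikh automaton. -/
structure NPA (Q S : Type) (d : ℕ) where
  init : Q
  trans : Q → S → (Fin d → ℕ) → Q → Prop
  acc : Q → Prop
  C : Set (Fin d → ℕ)

namespace NPA

variable {Q S : Type} {d : ℕ}

/-- `r, v` form a run of `A` on the infinite word `α`. -/
def IsRun (A : NPA Q S d) (α : ℕ → S) (r : ℕ → Q) (v : ℕ → Fin d → ℕ) : Prop :=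
  r 0 = A.init ∧ ∀ i, A.trans (r i) (α i) (v i) (r (i + 1))

/-- Partial sums of the vectors of a run over positions `m, …, n-1`. -/
def partSum (v : ℕ → Fin d → ℕ) (m n : ℕ) : Fin d → ℕ := ∑ i ∈ Finset.Ico m n, v i

/-- Nondeterministic reachability-regular acceptance. -/
def ReachRegAccept (A : NPA Q S d) (α : ℕ → S) : Prop :=
  ∃ r v, A.IsRun α r v ∧ (∃ i, 1 ≤ i ∧ A.acc (r i) ∧ partSum v 0 i ∈ A.C) ∧
    ∀ n, ∃ i, n ≤ i ∧ A.acc (r i)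

/-- Nondeterministic strong reset acceptance. -/
def StrongResetAccept (A : NPA Q S d) (α : ℕ → S) : Prop :=
  ∃ r v, A.IsRun α r v ∧
    (∀ n, ∃ i, n ≤ i ∧ 1 ≤ i ∧ A.acc (r i)) ∧
    ∀ m n, m < n → (m = 0 ∨ (1 ≤ m ∧ A.acc (r m))) → A.acc (r n) →
      (∀ j, m < j → j < n → ¬ A.acc (r j)) → partSum v m n ∈ A.C

/-- Nondeterministic weak reset acceptance. -/
def WeakResetAccept (A : NPA Q S d) (α : ℕ → S) : Prop :=
  ∃ r v, A.IsRun α r v ∧ ∃ k : ℕ → ℕ, k 0 = 0 ∧ StrictMono k ∧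
    (∀ i, A.acc (r (k (i + 1)))) ∧ (∀ i, partSum v (k i) (k (i + 1)) ∈ A.C)

/-- Runs of a nondeterministic PA on a finite word, from state `p` to state `q`
collecting vector sum `v`. -/
def ListRun (A : NPA Q S d) : Q → List S → (Fin d → ℕ) → Q → Prop
  | p, [], v, q => q = p ∧ v = 0
  | p, a :: w, v, q => ∃ u p', A.trans p a u p' ∧ ∃ v', A.ListRun p' w v' q ∧ v = u + v'

/-- Finite-word acceptance for a nondeterministic PA. -/
def AcceptsWord (A : NPA Q S d) (w : List S) : Prop :=
  ∃ v q, A.ListRun A.init w v q ∧ A.acc q ∧ v ∈ A.C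

end NPA

/-- `L` is recognized by a (nondeterministic) reachability-regular PA. -/
def NPAReachRegRecog {S : Type} (L : Set (ℕ → S)) : Prop :=
  ∃ (d : ℕ) (Q : Type) (_ : Finite Q) (A : NPA Q S d),
    SemiLin A.C ∧ L = {α | A.ReachRegAccept α}

/-- `L` is recognized by a (nondeterministic) strong reset PA. -/
def NPAStrongResetRecog {S : Type} (L : Set (ℕ → S)) : Prop :=
  ∃ (d : ℕ) (Q : Type) (_ : Finite Q) (A : NPA Q S d),
    SemiLin A.C ∧ L = {α | A.StrongResetAccept α}

/-- `L` is recognized by a (nondeterministic) weak reset PA. -/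
def NPAWeakResetRecog {S : Type} (L : Set (ℕ → S)) : Prop :=
  ∃ (d : ℕ) (Q : Type) (_ : Finite Q) (A : NPA Q S d),
    SemiLin A.C ∧ L = {α | A.WeakResetAccept α}

/-- A nondeterministic Büchi automaton. -/
structure NBA (Q S : Type) where
  init : Q
  trans : Q → S → Q → Prop
  acc : Q → Prop

/-- Büchi acceptance. -/
def NBA.Accepts {Q S : Type} (B : NBA Q S) (α : ℕ → S) : Prop :=
  ∃ r : ℕ → Q, r 0 = B.init ∧ (∀ i, B.trans (r i) (α i) (r (i + 1))) ∧
    ∀ n, ∃ i, n ≤ i ∧ B.acc (r i)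

/-- `L` is ω-regular: recognized by a nondeterministic Büchi automaton. -/
def OmegaRegular {S : Type} (L : Set (ℕ → S)) : Prop :=
  ∃ (Q : Type) (_ : Finite Q) (B : NBA Q S), L = {α | B.Accepts α}

/-- `L_{a=b}`: infinitely many prefixes with `|·|_a = |·|_b`
(alphabet `{a,b} = Bool`, `a := true`, `b := false`). -/
def L18ab : Set (ℕ → Bool) :=
  {α | ∀ m, ∃ i, m ≤ i ∧ (pref α i).count true = (pref α i).count false}

/-- `L_{2a=b}`: infinitely many prefixes with `2|·|_a = |·|_b`. -/
def L182ab : Set (ℕ → Bool) :=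
  {α | ∀ m, ∃ i, m ≤ i ∧ 2 * (pref α i).count true = (pref α i).count false}


/-! An ultimately periodic word `u v^ω` with infinitely many prefixes `w` of length `2|w|_a` and
infinitely many of length `3|w|_a` has, among each kind, two prefixes whose lengths differ by a
multiple of `|v|`; hence `|v| = 2|v|_a = 3|v|_a`, so `v` is empty. On the other hand a weak reset
run that is in the same state at two reset points may repeat the stretch between them forever, so
every language recognised by a weak reset PA (even a nondeterministic one) that is non-empty
contains an ultimately periodic word. The intersection contains the word `doublingWord`, hence it
is not recognisable, while each of the two languages is recognised by a one-state deterministic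
PA counting `(|w|_a, |w|)` on each segment. -/

def cnt (α : ℕ → Bool) (i : ℕ) : ℕ := (pref α i).count true

def ratioLang (c : ℕ) : Set (ℕ → Bool) := {α | ∀ m, ∃ i, m ≤ i ∧ c * cnt α i = i}

section Counting

variable {α : ℕ → Bool}

lemma pref_succ (α : ℕ → Bool) (i : ℕ) : pref α (i + 1) = pref α i ++ [α i] := by
  simp only [pref]
  rw [List.ofFn_succ']
  simp [Fin.castSucc]

@[simp] lemma cnt_zero (α : ℕ → Bool) : cnt α 0 = 0 := by simp [cnt, pref]

lemma cnt_succ (α : ℕ → Bool) (i : ℕ) : cnt α (i + 1) = cnt α i + (α i).toNat := by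
  cases h : α i <;> simp [cnt, pref_succ, h]

lemma cnt_add_count_false (α : ℕ → Bool) (i : ℕ) : cnt α i + (pref α i).count false = i := by
  have := List.count_true_add_count_false (pref α i)
  rwa [pref, List.length_ofFn] at this

lemma L18ab_eq : L18ab = ratioLang 2 := by
  ext α
  refine forall_congr' fun m => exists_congr fun i => and_congr_right fun _ => ?_
  have := cnt_add_count_false α i
  unfold cnt at this ⊢
  omega

lemma L182ab_eq : L182ab = ratioLang 3 := by
  ext α
  refine forall_congr' fun m => exists_congr fun i => and_congr_right fun _ => ?_
  have := cnt_add_count_false α i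
  unfold cnt at this ⊢
  omega

lemma cnt_add_of_forall_eq {m l : ℕ} {b : Bool} (h : ∀ s < l, α (m + s) = b) :
    cnt α (m + l) = cnt α m + l * b.toNat := by
  induction l with
  | zero => simp
  | succ l ih =>
    rw [← add_assoc, cnt_succ, ih fun s hs => h s (by omega), h l (by omega)]
    ring

lemma cnt_add_period {n p : ℕ} (hper : ∀ i, n ≤ i → α (i + p) = α i) {i : ℕ} (hi : n ≤ i) :
    cnt α (i + p) + cnt α n = cnt α i + cnt α (n + p) := by
  induction i, hi using Nat.le_induction with
  | base => ring
  | succ i hi ih =>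
    rw [add_right_comm, cnt_succ, cnt_succ, hper i hi]
    omega

lemma cnt_add_mul_period {n p : ℕ} (hper : ∀ i, n ≤ i → α (i + p) = α i) {i : ℕ} (hi : n ≤ i)
    (t : ℕ) : cnt α (i + t * p) + t * cnt α n = cnt α i + t * cnt α (n + p) := by
  induction t with
  | zero => simp
  | succ t ih =>
    have := cnt_add_period hper (i := i + t * p) (by omega)
    rw [show i + (t + 1) * p = i + t * p + p by ring]
    linarith

/-- Two density-`c` prefixes of an ultimately periodic word whose lengths are congruent modulo the
period differ by whole periods, each of which must then have density `c` as well. -/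
lemma mul_cnt_add_period {n p c : ℕ} (hp : 0 < p) (hper : ∀ i, n ≤ i → α (i + p) = α i)
    (hα : α ∈ ratioLang c) : c * cnt α (n + p) = c * cnt α n + p := by
  have hinf : {i | n ≤ i ∧ c * cnt α i = i}.Infinite :=
    Set.infinite_of_forall_exists_gt fun m => by
      obtain ⟨i, hi, hci⟩ := hα (n + m + 1)
      exact ⟨i, ⟨by omega, hci⟩, by omega⟩
  obtain ⟨x, ⟨hnx, hx⟩, y, ⟨-, hy⟩, hxy, hmod⟩ := Nat.exists_lt_modEq_of_infinite hinf hp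
  obtain ⟨t, ht⟩ := (Nat.modEq_iff_dvd' hxy.le).mp hmod
  have hyx : y = x + t * p := by rw [mul_comm]; omega
  have ht0 : 0 < t := Nat.pos_of_ne_zero fun h => by simp [h] at ht; omega
  have key := congrArg (c * ·) (cnt_add_mul_period hper hnx t)
  simp only [mul_add, ← hyx, hy, hx] at key
  apply Nat.eq_of_mul_eq_mul_left ht0
  rw [hyx] at key
  linarith

lemma not_ultimatelyPeriodic_of_mem_inter (hα : α ∈ ratioLang 2 ∩ ratioLang 3) :
    ¬ UltimatelyPeriodic α := by
  rintro ⟨n, p, hp, hper⟩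
  have h2 := mul_cnt_add_period hp hper hα.1
  have h3 := mul_cnt_add_period hp hper hα.2
  omega

end Counting

/-- The word `b a (b a)(b b a a)(b⁴ a⁴)⋯`: the block at positions `[2^(J+1), 2^(J+2))` is
`b^(2^J) a^(2^J)`, so the prefixes of lengths `2^(J+1)` and `3 · 2^J` both contain `2^J` letters `a`. -/
def doublingWord (i : ℕ) : Bool := decide (3 * 2 ^ Nat.log 2 i ≤ 2 * i + 1)

lemma doublingWord_two_pow_add {J s : ℕ} (hs : s < 2 ^ J) :
    doublingWord (2 ^ (J + 1) + s) = false := by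
  have hlog : Nat.log 2 (2 ^ (J + 1) + s) = J + 1 :=
    Nat.log_eq_of_pow_le_of_lt_pow (by omega) (by rw [pow_succ, pow_succ]; omega)
  rw [doublingWord, hlog, decide_eq_false_iff_not, pow_succ]
  omega

lemma doublingWord_three_mul_two_pow_add {J s : ℕ} (hs : s < 2 ^ J) :
    doublingWord (3 * 2 ^ J + s) = true := by
  have hlog : Nat.log 2 (3 * 2 ^ J + s) = J + 1 :=
    Nat.log_eq_of_pow_le_of_lt_pow (by rw [pow_succ]; omega) (by rw [pow_succ, pow_succ]; omega)
  rw [doublingWord, hlog, decide_eq_true_eq, pow_succ]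
  omega

lemma cnt_doublingWord_three_mul_two_pow {J : ℕ} (h : cnt doublingWord (2 ^ (J + 1)) = 2 ^ J) :
    cnt doublingWord (3 * 2 ^ J) = 2 ^ J := by
  rw [show 3 * 2 ^ J = 2 ^ (J + 1) + 2 ^ J by ring,
    cnt_add_of_forall_eq fun s hs => doublingWord_two_pow_add hs, h, Bool.toNat_false]
  simp

lemma cnt_doublingWord_two_pow (J : ℕ) : cnt doublingWord (2 ^ (J + 1)) = 2 ^ J := by
  induction J with
  | zero => simp [cnt_succ, doublingWord]
  | succ J ih =>
    rw [show 2 ^ (J + 1 + 1) = 3 * 2 ^ J + 2 ^ J by ring,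
      cnt_add_of_forall_eq fun s hs => doublingWord_three_mul_two_pow_add hs,
      cnt_doublingWord_three_mul_two_pow ih, Bool.toNat_true]
    ring

lemma doublingWord_mem_inter : doublingWord ∈ ratioLang 2 ∩ ratioLang 3 := by
  have hlt (m : ℕ) : m < 2 ^ m := Nat.lt_two_pow_self
  constructor
  · refine fun m => ⟨2 ^ (m + 1), (hlt (m + 1)).le.trans' (by omega), ?_⟩
    rw [cnt_doublingWord_two_pow, pow_succ, mul_comm]
  · refine fun m => ⟨3 * 2 ^ m, by linarith [hlt m], ?_⟩
    rw [cnt_doublingWord_three_mul_two_pow (cnt_doublingWord_two_pow m)]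

lemma DetPA.vecSum_add {Q S M : Type} {d : ℕ} (A : DetPA Q S d M) (α : ℕ → S) {l m n : ℕ}
    (hlm : l ≤ m) (hmn : m ≤ n) : A.vecSum α l m + A.vecSum α m n = A.vecSum α l n :=
  Finset.sum_Ico_consecutive _ hlm hmn

/-- One state, reading `x` adds `(x.toNat, 1)`: the counters hold the number of `a`s and the length
of the current segment. -/
def countPA (c : ℕ) : DetPA Unit Bool 2 ℕ where
  init := ()
  trans := fun _ x => (![x.toNat, 1], ())
  acc := fun _ => True
  C := {v | c * v 0 = v 1}

lemma semiLin_countPA_C (c : ℕ) : SemiLin (countPA c).C := by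
  refine ⟨1, fun _ => 0, fun _ => {![1, c]}, ?_⟩
  ext v
  simp only [countPA, LinSet, Set.mem_iUnion, Set.mem_ofPred_eq, Finset.sum_singleton, zero_add,
    exists_const]
  constructor
  · intro h
    exact ⟨fun _ => v 0, funext fun j => by fin_cases j <;> simp [← h, mul_comm]⟩
  · rintro ⟨z, rfl⟩
    simp [mul_comm]

section CountPA

variable {c : ℕ} {α : ℕ → Bool}

lemma countPA_vecSum_zero (n : ℕ) : (countPA c).vecSum α 0 n = ![cnt α n, n] := by
  induction n with
  | zero => ext j; fin_cases j <;> simp [DetPA.vecSum]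
  | succ n ih =>
    rw [← (countPA c).vecSum_add α n.zero_le n.le_succ, ih]
    ext j
    fin_cases j <;> simp [DetPA.vecSum, DetPA.step, countPA, cnt_succ]

lemma countPA_vecSum_mem_C_iff {m n : ℕ} (hm : c * cnt α m = m) (hmn : m ≤ n) :
    (countPA c).vecSum α m n ∈ (countPA c).C ↔ c * cnt α n = n := by
  have h := (countPA c).vecSum_add α m.zero_le hmn
  rw [countPA_vecSum_zero, countPA_vecSum_zero] at h
  generalize (countPA c).vecSum α m n = s at h ⊢
  have h0 := congrFun h 0
  have h1 := congrFun h 1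
  simp only [Pi.add_apply, Matrix.cons_val_zero, Matrix.cons_val_one] at h0 h1
  show c * _ = _ ↔ _
  rw [← h0, mul_add]
  omega

lemma countPA_weakResetAccept_iff : (countPA c).WeakResetAccept α ↔ α ∈ ratioLang c := by
  constructor
  · rintro ⟨k, hk0, hk, -, hC⟩
    have hprefix (n : ℕ) : c * cnt α (k n) = k n := by
      induction n with
      | zero => simp [hk0]
      | succ n ih => exact (countPA_vecSum_mem_C_iff ih (hk n.lt_succ_self).le).mp (hC n)
    exact fun m => ⟨k m, hk.id_le m, hprefix m⟩
  · intro hα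
    obtain ⟨φ, hφ, hφα⟩ := Filter.extraction_of_frequently_atTop (Filter.frequently_atTop.mpr hα)
    set k : ℕ → ℕ := fun n => if n = 0 then 0 else φ n
    have hk : StrictMono k := strictMono_nat_of_lt_succ fun n => by
      rcases n with _ | n
      · simpa [k] using (hφ Nat.zero_lt_one).trans_le' (Nat.zero_le _)
      · simpa [k] using hφ n.succ.lt_succ_self
    have hprefix (n : ℕ) : c * cnt α (k n) = k n := by
      rcases n with _ | n
      · simp [k]
      · exact hφα _
    exact ⟨k, rfl, hk, fun _ => trivial,
      fun n => (countPA_vecSum_mem_C_iff (hprefix n) (hk n.lt_succ_self).le).mpr (hprefix _)⟩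

end CountPA

lemma detWeakResetRecog_ratioLang (c : ℕ) : DetWeakResetRecog (ratioLang c) :=
  ⟨2, Unit, inferInstance, countPA c, semiLin_countPA_C c,
    Set.ext fun _ => countPA_weakResetAccept_iff.symm⟩

/-- Successor on the lasso `0 → 1 → ⋯ → b - 1 → a`. -/
def loopSucc (a b y : ℕ) : ℕ := if y + 1 = b then a else y + 1

def loopPos (a b m : ℕ) : ℕ := (loopSucc a b)^[m] 0

section Lasso

variable {a b : ℕ}

lemma iterate_loopSucc_of_lt {y s : ℕ} (h : y + s < b) : (loopSucc a b)^[s] y = y + s := by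
  induction s with
  | zero => rfl
  | succ s ih =>
    rw [Function.iterate_succ_apply', ih (by omega), loopSucc, if_neg (by omega), add_assoc]

lemma loopPos_of_lt {m : ℕ} (h : m < b) : loopPos a b m = m := by
  simpa [loopPos] using iterate_loopSucc_of_lt (a := a) (y := 0) (s := m) (by omega)

lemma loopPos_succ (m : ℕ) : loopPos a b (m + 1) = loopSucc a b (loopPos a b m) :=
  Function.iterate_succ_apply' _ _ _

lemma loopPos_add (m s : ℕ) : loopPos a b (m + s) = (loopSucc a b)^[s] (loopPos a b m) := by
  rw [loopPos, add_comm, Function.iterate_add_apply, loopPos]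

lemma loopPos_lt (hab : a < b) (m : ℕ) : loopPos a b m < b := by
  induction m with
  | zero => exact (Nat.zero_le a).trans_lt hab
  | succ m ih =>
    rw [loopPos_succ, loopSucc]
    split_ifs <;> omega

lemma loopPos_add_period (hab : a < b) {m : ℕ} (hm : a ≤ m) :
    loopPos a b (m + (b - a)) = loopPos a b m := by
  have hb : loopPos a b b = loopPos a b a := by
    obtain ⟨b', rfl⟩ : ∃ b', b = b' + 1 := ⟨b - 1, by omega⟩
    rw [loopPos_succ, loopPos_of_lt b'.lt_succ_self, loopPos_of_lt hab, loopSucc, if_pos rfl]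
  obtain ⟨s, rfl⟩ := Nat.exists_eq_add_of_le hm
  rw [show a + s + (b - a) = b + s by omega, loopPos_add, loopPos_add, hb]

lemma ultimatelyPeriodic_comp_loopPos {S : Type} (hab : a < b) (α : ℕ → S) :
    UltimatelyPeriodic (α ∘ loopPos a b) :=
  ⟨a, b - a, by omega, fun _ hm => congrArg α (loopPos_add_period hab hm)⟩

lemma map_loopSucc {k : ℕ → ℕ} (hk : StrictMono k) (i j m : ℕ) :
    k (loopSucc i j m) = loopSucc (k i) (k j) (k (m + 1) - 1) := by
  have hpos : 0 < k (m + 1) := (Nat.zero_le _).trans_lt (hk m.lt_succ_self)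
  rw [loopSucc, loopSucc, Nat.sub_add_cancel hpos]
  by_cases h : m + 1 = j
  · rw [if_pos h, if_pos (congrArg k h)]
  · rw [if_neg h, if_neg (hk.injective.ne h)]

end Lasso

/-- Reset points along the looped run: the segments `[k i, k (i + 1))` of the original run,
traversed in the order `0, 1, …, j - 1, i, …, j - 1, i, …`. -/
def loopResets (k : ℕ → ℕ) (i j n : ℕ) : ℕ :=
  ∑ m ∈ Finset.range n, (k (loopPos i j m + 1) - k (loopPos i j m))

section LoopResets

variable {k : ℕ → ℕ} {i j : ℕ}

lemma loopResets_succ (n : ℕ) : loopResets k i j (n + 1) =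
    loopResets k i j n + (k (loopPos i j n + 1) - k (loopPos i j n)) :=
  Finset.sum_range_succ _ _

lemma strictMono_loopResets (hk : StrictMono k) : StrictMono (loopResets k i j) :=
  strictMono_nat_of_lt_succ fun n => by
    rw [loopResets_succ]
    have := hk (Nat.lt_add_one (loopPos i j n))
    omega

lemma loopSucc_iterate_loopResets (hk : StrictMono k) (hij : i < j) (n : ℕ) {s : ℕ}
    (hs : k (loopPos i j n) + s < k (loopPos i j n + 1)) :
    (loopSucc (k i) (k j))^[s] (k (loopPos i j n)) = k (loopPos i j n) + s :=
  iterate_loopSucc_of_lt (hs.trans_le (hk.monotone (loopPos_lt hij n)))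

lemma loopPos_loopResets (hk0 : k 0 = 0) (hk : StrictMono k) (hij : i < j) (n : ℕ) :
    loopPos (k i) (k j) (loopResets k i j n) = k (loopPos i j n) := by
  induction n with
  | zero => simp [loopResets, loopPos, hk0]
  | succ n ih =>
    set y := k (loopPos i j n)
    have hlt : y < k (loopPos i j n + 1) := hk (loopPos i j n).lt_succ_self
    obtain ⟨s, hs⟩ : ∃ s, k (loopPos i j n + 1) - y = s + 1 := ⟨_, (Nat.succ_pred_eq_of_pos
      (Nat.sub_pos_of_lt hlt)).symm⟩
    rw [loopResets_succ, loopPos_add, ih, hs, Function.iterate_succ_apply',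
      loopSucc_iterate_loopResets hk hij n (by omega), loopPos_succ, map_loopSucc hk,
      show y + s = k (loopPos i j n + 1) - 1 by omega]

lemma partSum_loopResets {d : ℕ} (v : ℕ → Fin d → ℕ) (hk0 : k 0 = 0) (hk : StrictMono k) (hij : i < j) (n : ℕ) :
    NPA.partSum (v ∘ loopPos (k i) (k j)) (loopResets k i j n) (loopResets k i j (n + 1)) =
      NPA.partSum v (k (loopPos i j n)) (k (loopPos i j n + 1)) := by
  simp only [NPA.partSum, Finset.sum_Ico_eq_sum_range, loopResets_succ, add_tsub_cancel_left,
    Function.comp_apply, loopPos_add, loopPos_loopResets hk0 hk hij]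
  refine Finset.sum_congr rfl fun s hs => ?_
  rw [loopSucc_iterate_loopResets hk hij n (by have := Finset.mem_range.mp hs; omega)]

end LoopResets

namespace NPA

variable {Q S : Type} {d : ℕ} {A : NPA Q S d} {α : ℕ → S} {r : ℕ → Q} {v : ℕ → Fin d → ℕ}

lemma IsRun.comp_loopPos (hrun : A.IsRun α r v) {a b : ℕ} (hr : r a = r b) :
    A.IsRun (α ∘ loopPos a b) (r ∘ loopPos a b) (v ∘ loopPos a b) := by
  refine ⟨hrun.1, fun m => ?_⟩
  have hnext : r (loopPos a b (m + 1)) = r (loopPos a b m + 1) := by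
    rw [loopPos_succ, loopSucc]
    split_ifs with h
    · rw [hr, h]
    · rfl
  simpa only [Function.comp_apply, hnext] using hrun.2 (loopPos a b m)

lemma weakResetAccept_comp_loopPos (hrun : A.IsRun α r v) {k : ℕ → ℕ} (hk0 : k 0 = 0)
    (hk : StrictMono k)
    (hacc : ∀ n, A.acc (r (k (n + 1)))) (hC : ∀ n, partSum v (k n) (k (n + 1)) ∈ A.C)
    {i j : ℕ} (hi : 0 < i) (hij : i < j) (hr : r (k i) = r (k j)) :
    A.WeakResetAccept (α ∘ loopPos (k i) (k j)) := by
  refine ⟨_, _, hrun.comp_loopPos hr, loopResets k i j, rfl, strictMono_loopResets hk,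
    fun n => ?_, fun n => ?_⟩
  · have hpos : 0 < loopPos i j (n + 1) := by
      rw [loopPos_succ, loopSucc]
      split_ifs <;> omega
    obtain ⟨m, hm⟩ := Nat.exists_eq_add_of_lt hpos
    simpa only [Function.comp_apply, loopPos_loopResets hk0 hk hij, hm, zero_add] using hacc m
  · rw [partSum_loopResets v hk0 hk hij]
    exact hC _

lemma WeakResetAccept.exists_ultimatelyPeriodic [Finite Q] (h : A.WeakResetAccept α) :
    ∃ β, UltimatelyPeriodic β ∧ A.WeakResetAccept β := by
  obtain ⟨r, v, hrun, k, hk0, hk, hacc, hC⟩ := h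
  obtain ⟨i, j, hij, hr⟩ := Set.finite_univ.exists_lt_map_eq_of_forall_mem
    (f := fun m => r (k (m + 1))) fun _ => Set.mem_univ _
  exact ⟨_, ultimatelyPeriodic_comp_loopPos (hk (by omega)) α,
    weakResetAccept_comp_loopPos hrun hk0 hk hacc hC i.succ_pos (by omega) hr⟩

end NPA

lemma NPAWeakResetRecog.exists_ultimatelyPeriodic {S : Type} {L : Set (ℕ → S)}
    (hL : NPAWeakResetRecog L) {α : ℕ → S} (hα : α ∈ L) : ∃ β ∈ L, UltimatelyPeriodic β := by
  obtain ⟨d, Q, _, A, -, rfl⟩ := hL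
  obtain ⟨β, hβ, hacc⟩ := NPA.WeakResetAccept.exists_ultimatelyPeriodic hα
  exact ⟨β, hacc, hβ⟩

namespace DetPA

variable {Q S : Type} {d : ℕ}

def toNPA (A : DetPA Q S d ℕ) : NPA Q S d where
  init := A.init
  trans := fun p x u q => A.trans p x = (u, q)
  acc := A.acc
  C := A.C

lemma toNPA_isRun_iff (A : DetPA Q S d ℕ) (α : ℕ → S) (r : ℕ → Q) (v : ℕ → Fin d → ℕ) :
    A.toNPA.IsRun α r v ↔ r = A.stateAt α ∧ v = A.step α := by
  constructor
  · rintro ⟨hr0, hstep⟩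
    have hr : r = A.stateAt α := funext fun n => by
      induction n with
      | zero => exact hr0
      | succ n ih => exact (congrArg Prod.snd (hstep n)).symm.trans (by rw [ih]; rfl)
    refine ⟨hr, funext fun n => ?_⟩
    rw [DetPA.step, ← hr]
    exact (congrArg Prod.fst (hstep n)).symm
  · rintro ⟨rfl, rfl⟩
    exact ⟨rfl, fun _ => rfl⟩

lemma toNPA_weakResetAccept_iff (A : DetPA Q S d ℕ) (α : ℕ → S) :
    A.toNPA.WeakResetAccept α ↔ A.WeakResetAccept α := by
  simp only [NPA.WeakResetAccept, toNPA_isRun_iff, and_assoc, exists_and_left, exists_eq_left]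
  rfl

end DetPA

lemma DetWeakResetRecog.npaWeakResetRecog {S : Type} {L : Set (ℕ → S)}
    (hL : DetWeakResetRecog L) : NPAWeakResetRecog L := by
  obtain ⟨d, Q, hQ, A, hC, rfl⟩ := hL
  exact ⟨d, Q, hQ, A.toNPA, hC, Set.ext fun α => (A.toNPA_weakResetAccept_iff α).symm⟩

/-- `L_{a=b} ∩ L_{2a=b}` contains no ultimately periodic word, hence is not
weak reset PA recognizable; so deterministic weak reset PA languages are not closed
under intersection. -/
theorem weakReset_not_closed_inter :
    (∀ α ∈ L18ab ∩ L182ab, ¬ UltimatelyPeriodic α) ∧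
    ¬ NPAWeakResetRecog (L18ab ∩ L182ab) ∧
    ∃ L₁ L₂ : Set (ℕ → Bool), DetWeakResetRecog L₁ ∧ DetWeakResetRecog L₂ ∧
      ¬ DetWeakResetRecog (L₁ ∩ L₂) := by
  rw [L18ab_eq, L182ab_eq]
  have not_npa : ¬ NPAWeakResetRecog (ratioLang 2 ∩ ratioLang 3) := fun h => by
    obtain ⟨β, hβ, hper⟩ := h.exists_ultimatelyPeriodic doublingWord_mem_inter
    exact not_ultimatelyPeriodic_of_mem_inter hβ hper
  exact ⟨fun _ => not_ultimatelyPeriodic_of_mem_inter, not_npa, _, _,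
    detWeakResetRecog_ratioLang 2, detWeakResetRecog_ratioLang 3,
    fun h => not_npa h.npaWeakResetRecog⟩
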